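/- Let μ be a finite complex Borel measure on ℝ³ whose Fourier transform μ̂ is C², even, and satisfies |∇μ̂(x)| ≤ C(1+|x|)^{−1−δ} for some C, δ > 0 and all x ∈ ℝ³. Define ϑ(x) := −x·∇μ̂(x) and ψ(x) := 2π|x|²e^{−π|x|²}. Then there is a constant C' (depending on μ and δ) such that |ϑ(x)| ≤ C' ∫_1^∞ ψ(x/α) dα/α^{1+δ} for every x ∈ ℝ³. -/

import Mathlib

/-!
Both sides are comparable to the weight `‖x‖² / max(1, ‖x‖)^(2+δ)`. For `ϑ`: evenness kills
`∇μ̂(0)`, so the C¹ gradient is `O(‖x‖)` on the unit ball and `|ϑ x| = O(‖x‖²)` there, while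
outside it the decay hypothesis gives `|ϑ x| = O(‖x‖^(-δ))`. For the integral: with
`s = max(1, ‖x‖)`, every `α ∈ (s, 2s]` puts `‖x‖/α` in `[‖x‖/(2s), 1]`, where the Gaussian
profile is at least `2π e^(-π)` times the square of its argument; integrating over this
interval of length `s` already yields the weight, up to a constant.
-/

open MeasureTheory Real Set
open scoped RealInnerProductSpace

noncomputable def gaussProfile (t : ℝ) : ℝ := 2 * π * t ^ 2 * exp (-π * t ^ 2)

noncomputable def dominationWeight (δ r : ℝ) : ℝ := r ^ 2 / max 1 r ^ (2 + δ)

lemma continuous_gaussProfile : Continuous gaussProfile := by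
  unfold gaussProfile; fun_prop

lemma gaussProfile_nonneg (t : ℝ) : 0 ≤ gaussProfile t := by
  unfold gaussProfile; positivity

lemma gaussProfile_le_two (t : ℝ) : gaussProfile t ≤ 2 := by
  have h := add_one_le_exp (π * t ^ 2)
  have hmul : π * t ^ 2 * exp (-π * t ^ 2) ≤ 1 := by
    calc π * t ^ 2 * exp (-π * t ^ 2) ≤ exp (π * t ^ 2) * exp (-π * t ^ 2) := by
          gcongr; linarith
      _ = 1 := by rw [← exp_add]; simp
  unfold gaussProfile; linarith

lemma sq_mul_le_gaussProfile {a t : ℝ} (ha : 0 ≤ a) (hat : a ≤ t) (ht : t ≤ 1) :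
    2 * π * exp (-π) * a ^ 2 ≤ gaussProfile t := by
  have ht2 : t ^ 2 ≤ 1 := pow_le_one₀ (ha.trans hat) ht
  have hexp : exp (-π) ≤ exp (-π * t ^ 2) := exp_le_exp.mpr (by nlinarith [pi_pos])
  unfold gaussProfile
  calc 2 * π * exp (-π) * a ^ 2 = 2 * π * a ^ 2 * exp (-π) := by ring
    _ ≤ 2 * π * t ^ 2 * exp (-π * t ^ 2) := by gcongr

lemma integrableOn_gaussProfile_div_rpow (r : ℝ) {δ : ℝ} (hδ : 0 < δ) :
    IntegrableOn (fun α => gaussProfile (α⁻¹ * r) / α ^ (1 + δ)) (Ioi 1) := by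
  have hcont : ContinuousOn (fun α => gaussProfile (α⁻¹ * r) / α ^ (1 + δ)) (Ioi 1) := by
    refine ContinuousOn.div ?_ ?_ fun α hα => (rpow_pos_of_pos (one_pos.trans hα) _).ne'
    · exact continuous_gaussProfile.comp_continuousOn
        ((continuousOn_inv₀.mono fun α hα => (one_pos.trans hα).ne').mul continuousOn_const)
    · exact continuousOn_id.rpow_const fun α _ => Or.inr (by linarith)
  refine Integrable.mono' ((integrableOn_Ioi_rpow_of_lt (by linarith : -(1 + δ) < -1)
    one_pos).const_mul 2) (hcont.aestronglyMeasurable measurableSet_Ioi) ?_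
  filter_upwards [ae_restrict_mem measurableSet_Ioi] with α hα
  have hpos : 0 < α ^ (1 + δ) := rpow_pos_of_pos (one_pos.trans hα) _
  rw [norm_of_nonneg (div_nonneg (gaussProfile_nonneg _) hpos.le), rpow_neg (one_pos.trans hα).le,
    ← div_eq_mul_inv]
  exact div_le_div_of_nonneg_right (gaussProfile_le_two _) hpos.le

lemma dominationWeight_div_le_gaussProfile_div_rpow {δ r α : ℝ} (hδ : 0 ≤ 1 + δ) (hr : 0 ≤ r)
    (hα : α ∈ Ioc (max 1 r) (2 * max 1 r)) :
    2 * π * exp (-π) / (4 * 2 ^ (1 + δ)) * dominationWeight δ r / max 1 r ≤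
      gaussProfile (α⁻¹ * r) / α ^ (1 + δ) := by
  unfold dominationWeight
  set s := max 1 r
  have hs : 0 < s := one_pos.trans_le (le_max_left _ _)
  have hα0 : 0 < α := hs.trans hα.1
  have hlow : r / (2 * s) ≤ α⁻¹ * r := by
    rw [div_eq_inv_mul]; gcongr; exact hα.2
  have hhigh : α⁻¹ * r ≤ 1 := by
    rw [inv_mul_le_iff₀ hα0, mul_one]; exact (le_max_right _ _).trans hα.1.le
  have hprofile := sq_mul_le_gaussProfile (by positivity) hlow hhigh
  have hpow : α ^ (1 + δ) ≤ 2 ^ (1 + δ) * s ^ (1 + δ) := by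
    rw [← mul_rpow zero_le_two hs.le]; exact rpow_le_rpow hα0.le hα.2 (by linarith)
  have hs_pow : s ^ (2 + δ) = s * s ^ (1 + δ) := by
    rw [show 2 + δ = 1 + (1 + δ) by ring, rpow_add hs, rpow_one]
  calc 2 * π * exp (-π) / (4 * 2 ^ (1 + δ)) * (r ^ 2 / s ^ (2 + δ)) / s
      = 2 * π * exp (-π) * (r / (2 * s)) ^ 2 / (2 ^ (1 + δ) * s ^ (1 + δ)) := by
        rw [hs_pow]; field_simp; ring
    _ ≤ gaussProfile (α⁻¹ * r) / α ^ (1 + δ) := by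
        gcongr; exact gaussProfile_nonneg _

lemma exists_mul_dominationWeight_le_integral_gaussProfile {δ : ℝ} (hδ : 0 < δ) :
    ∃ c > 0, ∀ r, 0 ≤ r →
      c * dominationWeight δ r ≤ ∫ α in Ioi 1, gaussProfile (α⁻¹ * r) / α ^ (1 + δ) := by
  refine ⟨2 * π * exp (-π) / (4 * 2 ^ (1 + δ)), by positivity, fun r hr => ?_⟩
  set s := max 1 r
  have hs : 0 < s := one_pos.trans_le (le_max_left _ _)
  have hsub : Ioc s (2 * s) ⊆ Ioi 1 := fun α hα => (le_max_left _ _).trans_lt hα.1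
  have hint := integrableOn_gaussProfile_div_rpow r hδ
  set c := 2 * π * exp (-π) / (4 * 2 ^ (1 + δ))
  calc c * dominationWeight δ r = c * dominationWeight δ r / s * volume.real (Ioc s (2 * s)) := by
        rw [volume_real_Ioc, max_eq_left (by linarith)]; field_simp; ring
    _ ≤ ∫ α in Ioc s (2 * s), gaussProfile (α⁻¹ * r) / α ^ (1 + δ) :=
        setIntegral_ge_of_const_le_real measurableSet_Ioc measure_Ioc_lt_top.ne
          (fun α hα => dominationWeight_div_le_gaussProfile_div_rpow (by linarith) hr hα)
          (hint.mono_set hsub)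
    _ ≤ ∫ α in Ioi 1, gaussProfile (α⁻¹ * r) / α ^ (1 + δ) :=
        setIntegral_mono_set hint
          (ae_restrict_of_forall_mem measurableSet_Ioi fun α hα =>
            div_nonneg (gaussProfile_nonneg _) (rpow_pos_of_pos (one_pos.trans hα) _).le)
          hsub.eventuallyLE

lemma dominationWeight_of_le_one {δ r : ℝ} (hr : r ≤ 1) : dominationWeight δ r = r ^ 2 := by
  rw [dominationWeight, max_eq_left hr, one_rpow, div_one]

lemma dominationWeight_of_one_le {δ r : ℝ} (hr : 1 ≤ r) : dominationWeight δ r = (r ^ δ)⁻¹ := by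
  have hr0 : 0 < r := one_pos.trans_le hr
  rw [dominationWeight, max_eq_right hr, rpow_add hr0, rpow_two]
  field_simp

variable {E F : Type*} [NormedAddCommGroup E] [NormedSpace ℝ E]
  [NormedAddCommGroup F] [NormedSpace ℝ F]

lemma fderiv_zero_of_even {f : E → F} (hf : DifferentiableAt ℝ f 0) (heven : ∀ y, f (-y) = f y) :
    fderiv ℝ f 0 = 0 := by
  have hf' : HasFDerivAt f (fderiv ℝ f 0) (-0) := by rw [neg_zero]; exact hf.hasFDerivAt
  have hneg := hf'.comp (0 : E) (hasFDerivAt_id (0 : E)).neg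
  rw [ContinuousLinearMap.comp_neg, ContinuousLinearMap.comp_id, Function.comp_def] at hneg
  simp only [heven] at hneg
  have htwo : (2 : ℝ) • fderiv ℝ f 0 = 0 := by
    rw [two_smul]; nth_rewrite 1 [hneg.fderiv]; exact neg_add_cancel _
  exact (smul_eq_zero.mp htwo).resolve_left two_ne_zero

lemma exists_norm_le_mul_norm_of_contDiff [ProperSpace E] {g : E → F} (hg : ContDiff ℝ 1 g)
    (hg0 : g 0 = 0) : ∃ M, ∀ y, ‖y‖ ≤ 1 → ‖g y‖ ≤ M * ‖y‖ := by
  obtain ⟨M, hM⟩ := (isCompact_closedBall (0 : E) 1).exists_bound_of_continuousOn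
    (hg.continuous_fderiv one_ne_zero).continuousOn
  refine ⟨M, fun y hy => ?_⟩
  have hmem : y ∈ Metric.closedBall (0 : E) 1 := by rwa [mem_closedBall_zero_iff]
  simpa [hg0] using (convex_closedBall (0 : E) 1).norm_image_sub_le_of_norm_fderiv_le
    (fun z _ => (hg.differentiable one_ne_zero).differentiableAt) hM
    (Metric.mem_closedBall_self zero_le_one) hmem

lemma exists_norm_fderiv_apply_self_le_mul_dominationWeight [ProperSpace E] {f : E → F}
    (hf : ContDiff ℝ 2 f) (heven : ∀ y, f (-y) = f y) {C δ : ℝ} (hC : 0 < C) (hδ : 0 ≤ 1 + δ)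
    (hdecay : ∀ x, ‖fderiv ℝ f x‖ ≤ C * (1 + ‖x‖) ^ (-(1 + δ))) :
    ∃ K > 0, ∀ x, ‖fderiv ℝ f x x‖ ≤ K * dominationWeight δ ‖x‖ := by
  obtain ⟨M, hM⟩ := exists_norm_le_mul_norm_of_contDiff (hf.fderiv_right one_add_one_eq_two.le)
    (fderiv_zero_of_even (hf.differentiable two_ne_zero).differentiableAt heven)
  refine ⟨max M C, lt_max_of_lt_right hC, fun x => ?_⟩
  refine ((fderiv ℝ f x).le_opNorm x).trans ?_
  rcases le_total ‖x‖ 1 with hx | hx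
  · rw [dominationWeight_of_le_one hx]
    calc ‖fderiv ℝ f x‖ * ‖x‖ ≤ M * ‖x‖ * ‖x‖ := by gcongr; exact hM x hx
      _ ≤ max M C * ‖x‖ ^ 2 := by rw [mul_assoc, ← sq]; gcongr; exact le_max_left _ _
  · have hx0 : 0 < ‖x‖ := one_pos.trans_le hx
    rw [dominationWeight_of_one_le hx]
    calc ‖fderiv ℝ f x‖ * ‖x‖ ≤ C * ‖x‖ ^ (-(1 + δ)) * ‖x‖ := by
          gcongr
          refine (hdecay x).trans (mul_le_mul_of_nonneg_left ?_ hC.le)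
          exact rpow_le_rpow_of_nonpos hx0 (by linarith) (by linarith)
      _ = C * (‖x‖ ^ δ)⁻¹ := by
          rw [rpow_neg hx0.le, rpow_add hx0, rpow_one]; field_simp
      _ ≤ max M C * (‖x‖ ^ δ)⁻¹ := by gcongr; exact le_max_right _ _

theorem gaussian_domination_general
    (μhat : EuclideanSpace ℝ (Fin 3) → ℂ)
    (hC2 : ContDiff ℝ 2 μhat) (heven : ∀ y, μhat (-y) = μhat y)
    (C δ : ℝ) (hC : 0 < C) (hδ : 0 < δ)
    (hdecay : ∀ x, ‖fderiv ℝ μhat x‖ ≤ C * (1 + ‖x‖) ^ (-(1 + δ)))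
    (ϑ : EuclideanSpace ℝ (Fin 3) → ℂ) (hϑ : ∀ x, ϑ x = -(fderiv ℝ μhat x x))
    (ψ : EuclideanSpace ℝ (Fin 3) → ℝ)
    (hψ : ∀ y, ψ y = 2 * π * ‖y‖ ^ 2 * Real.exp (-π * ‖y‖ ^ 2)) :
    ∃ C' : ℝ, 0 < C' ∧ ∀ x : EuclideanSpace ℝ (Fin 3),
      ‖ϑ x‖ ≤ C' * ∫ α in Set.Ioi (1 : ℝ), ψ (α⁻¹ • x) / α ^ (1 + δ) := by
  obtain ⟨K, hK, hupper⟩ :=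
    exists_norm_fderiv_apply_self_le_mul_dominationWeight hC2 heven hC (by linarith) hdecay
  obtain ⟨c, hc, hlower⟩ := exists_mul_dominationWeight_le_integral_gaussProfile hδ
  refine ⟨K / c, by positivity, fun x => ?_⟩
  have hψ_smul : ∀ α ∈ Ioi (1 : ℝ), ψ (α⁻¹ • x) / α ^ (1 + δ) =
      gaussProfile (α⁻¹ * ‖x‖) / α ^ (1 + δ) := fun α hα => by
    rw [hψ, norm_smul, norm_inv, norm_of_nonneg (one_pos.trans hα).le]; rfl
  calc ‖ϑ x‖ = ‖fderiv ℝ μhat x x‖ := by rw [hϑ, norm_neg]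
    _ ≤ K * dominationWeight δ ‖x‖ := hupper x
    _ = K / c * (c * dominationWeight δ ‖x‖) := by field_simp
    _ ≤ K / c * ∫ α in Ioi 1, gaussProfile (α⁻¹ * ‖x‖) / α ^ (1 + δ) := by
        gcongr; exact hlower _ (norm_nonneg x)
    _ = K / c * ∫ α in Ioi 1, ψ (α⁻¹ • x) / α ^ (1 + δ) := by
        rw [setIntegral_congr_fun measurableSet_Ioi hψ_smul]

/-- Gaussian domination: if the Fourier transform `μ̂` of a finite complex
Borel measure `μ = w·ν` on ℝ³ is C², even, and satisfies `|∇μ̂(x)| ≤ C(1+|x|)^{-1-δ}`, then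
`ϑ(x) := -x·∇μ̂(x)` satisfies `|ϑ(x)| ≤ C' ∫_1^∞ ψ(x/α) dα/α^{1+δ}` with
`ψ(x) = 2π|x|²e^{-π|x|²}`. -/
theorem gaussian_domination
    (ν : Measure (EuclideanSpace ℝ (Fin 3))) [IsFiniteMeasure ν]
    (w : EuclideanSpace ℝ (Fin 3) → ℂ) (hw : Integrable w ν)
    (μhat : EuclideanSpace ℝ (Fin 3) → ℂ)
    (hμhat : ∀ y, μhat y = ∫ x, w x * Complex.exp (-(2 * π * Complex.I) * (⟪x, y⟫ : ℝ)) ∂ν)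
    (hC2 : ContDiff ℝ 2 μhat) (heven : ∀ y, μhat (-y) = μhat y)
    (C δ : ℝ) (hC : 0 < C) (hδ : 0 < δ)
    (hdecay : ∀ x, ‖fderiv ℝ μhat x‖ ≤ C * (1 + ‖x‖) ^ (-(1 + δ)))
    (ϑ : EuclideanSpace ℝ (Fin 3) → ℂ) (hϑ : ∀ x, ϑ x = -(fderiv ℝ μhat x x))
    (ψ : EuclideanSpace ℝ (Fin 3) → ℝ)
    (hψ : ∀ y, ψ y = 2 * π * ‖y‖ ^ 2 * Real.exp (-π * ‖y‖ ^ 2)) :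
    ∃ C' : ℝ, 0 < C' ∧ ∀ x : EuclideanSpace ℝ (Fin 3),
      ‖ϑ x‖ ≤ C' * ∫ α in Set.Ioi (1 : ℝ), ψ (α⁻¹ • x) / α ^ (1 + δ) :=
  gaussian_domination_general μhat hC2 heven C δ hC hδ hdecay ϑ hϑ ψ hψ
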